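/- The polynomial T_5 = x^4(x+1)^4(x^4+x^3+x^2+x+1)(x^4+x^3+1) ∈ F_2[x] is perfect: σ(T_5) = T_5. -/

import Mathlib

open Polynomial

/-!
A monic divisor of `A * B` is a product of monic divisors of `A` and of `B`, uniquely so when `A`
and `B` are coprime, and the monic divisors of `P ^ n` for a monic irreducible `P` are the `P ^ i`
with `i ≤ n`. Hence `σ` is multiplicative and `σ (P ^ n) = 1 + P + ⋯ + P ^ n`.

Write `P = X ^ 4 + X ^ 3 + X ^ 2 + X + 1` and `Q = X ^ 4 + X ^ 3 + 1`. `P` is the fifth cyclotomic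
polynomial, irreducible over `𝔽₂` because `2` has order `4 = deg P` modulo `5`, and `Q = P(X + 1)`.
Over `𝔽₂` one has `σ (X ^ 4) = P`, `σ ((X + 1) ^ 4) = Q`, `σ P = 1 + P = X (X + 1) ^ 3` and
`σ Q = 1 + Q = X ^ 3 (X + 1)`, and the product of these four is `X ^ 4 (X + 1) ^ 4 P Q`.
-/

/-- The sum of all monic divisors of a binary polynomial. -/
noncomputable def sigma2 (A : (ZMod 2)[X]) : (ZMod 2)[X] :=
  ∑ᶠ d ∈ {d : (ZMod 2)[X] | d.Monic ∧ d ∣ A}, d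

namespace Polynomial

variable {K : Type*} [Field K]

theorem finite_setOf_monic_dvd {A : K[X]} (hA : A ≠ 0) :
    {d : K[X] | d.Monic ∧ d ∣ A}.Finite := by
  have : Finite {x // x ∣ Associates.mk A} :=
    (UniqueFactorizationMonoid.fintypeSubtypeDvd _ (Associates.mk_ne_zero.mpr hA)).finite
  refine Set.Finite.of_finite_image (f := Associates.mk)
    ((Set.finite_coe_iff.mp this).subset ?_) ?_
  · rintro _ ⟨d, ⟨-, hd⟩, rfl⟩
    exact Associates.mk_dvd_mk.mpr hd
  · intro d hd d' hd' h
    exact eq_of_monic_of_associated hd.1 hd'.1 (Associates.mk_eq_mk_iff_associated.mp h)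

theorem setOf_monic_dvd_one : {d : K[X] | d.Monic ∧ d ∣ 1} = {1} := by
  ext d
  refine ⟨fun ⟨hd, hdvd⟩ => hd.eq_one_of_isUnit (isUnit_of_dvd_one hdvd), ?_⟩
  rintro rfl
  exact ⟨monic_one, dvd_rfl⟩

theorem setOf_monic_dvd_pow {P : K[X]} (hP : Irreducible P) (hPm : P.Monic) (n : ℕ) :
    {d : K[X] | d.Monic ∧ d ∣ P ^ n} = (P ^ ·) '' Set.Iic n := by
  ext d
  constructor
  · rintro ⟨hd, hdvd⟩
    obtain ⟨i, hi, hassoc⟩ := (dvd_prime_pow hP.prime n).mp hdvd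
    exact ⟨i, hi, (eq_of_monic_of_associated hd (hPm.pow i) hassoc).symm⟩
  · rintro ⟨i, hi, rfl⟩
    exact ⟨hPm.pow i, pow_dvd_pow P hi⟩

theorem setOf_monic_dvd_mul (A B : K[X]) :
    {d : K[X] | d.Monic ∧ d ∣ A * B} =
      Set.image2 (· * ·) {d | d.Monic ∧ d ∣ A} {d | d.Monic ∧ d ∣ B} := by
  classical
  ext d
  constructor
  · rintro ⟨hd, hdvd⟩
    obtain ⟨a, b, ha, hb, rfl⟩ := exists_dvd_and_dvd_of_dvd_mul hdvd
    have hab : a * b ≠ 0 := hd.ne_zero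
    refine ⟨normalize a, ⟨monic_normalize (left_ne_zero_of_mul hab), normalize_dvd_iff.mpr ha⟩,
      normalize b, ⟨monic_normalize (right_ne_zero_of_mul hab), normalize_dvd_iff.mpr hb⟩, ?_⟩
    change normalize a * normalize b = a * b
    rw [← normalize_mul, hd.normalize_eq_self]
  · rintro ⟨a, ⟨ha, haA⟩, b, ⟨hb, hbB⟩, rfl⟩
    exact ⟨ha.mul hb, mul_dvd_mul haA hbB⟩

theorem injOn_mul_setOf_monic_dvd {A B : K[X]} (hAB : IsCoprime A B) :
    Set.InjOn (fun p : K[X] × K[X] => p.1 * p.2)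
      ({d | d.Monic ∧ d ∣ A} ×ˢ {d | d.Monic ∧ d ∣ B}) := by
  rintro ⟨a, b⟩ ⟨⟨ha, haA⟩, -, hbB⟩ ⟨a', b'⟩ ⟨⟨ha', haA'⟩, -, hbB'⟩ (h : a * b = a' * b')
  have coprime {x y : K[X]} (hx : x ∣ A) (hy : y ∣ B) : IsCoprime x y :=
    (hAB.of_isCoprime_of_dvd_left hx).of_isCoprime_of_dvd_right hy
  have h₁ : a ∣ a' := (coprime haA hbB').dvd_of_dvd_mul_right (h ▸ dvd_mul_right a b)
  have h₂ : a' ∣ a := (coprime haA' hbB).dvd_of_dvd_mul_right (h ▸ dvd_mul_right a' b')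
  obtain rfl := eq_of_monic_of_associated ha ha' (associated_of_dvd_dvd h₁ h₂)
  exact Prod.ext rfl (mul_left_cancel₀ ha.ne_zero h)

theorem isCoprime_of_irreducible_of_monic_of_ne {P Q : K[X]} (hP : Irreducible P)
    (hQ : Irreducible Q) (hPm : P.Monic) (hQm : Q.Monic) (hPQ : P ≠ Q) : IsCoprime P Q :=
  hP.coprime_iff_not_dvd.mpr fun h =>
    hPQ (eq_of_monic_of_associated hPm hQm (hP.associated_of_dvd hQ h))

end Polynomial

theorem sigma2_one : sigma2 1 = 1 := by
  rw [sigma2, setOf_monic_dvd_one, finsum_mem_singleton]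

theorem sigma2_pow {P : (ZMod 2)[X]} (hP : Irreducible P) (hPm : P.Monic) (n : ℕ) :
    sigma2 (P ^ n) = ∑ i ∈ Finset.range (n + 1), P ^ i := by
  rw [sigma2, setOf_monic_dvd_pow hP hPm,
    finsum_mem_image (pow_injective_of_not_isUnit hP.not_isUnit hP.ne_zero).injOn,
    Nat.range_succ_eq_Iic, ← Finset.coe_Iic, finsum_mem_coe_finset]

theorem sigma2_mul {A B : (ZMod 2)[X]} (hA : A ≠ 0) (hB : B ≠ 0) (hAB : IsCoprime A B) :
    sigma2 (A * B) = sigma2 A * sigma2 B := by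
  have hfA := finite_setOf_monic_dvd hA
  have hfB := finite_setOf_monic_dvd hB
  rw [sigma2, sigma2, sigma2, setOf_monic_dvd_mul, ← Set.image_prod,
    finsum_mem_image (injOn_mul_setOf_monic_dvd hAB),
    finsum_mem_eq_finite_toFinset_sum _ (hfA.prod hfB), finsum_mem_eq_finite_toFinset_sum _ hfA,
    finsum_mem_eq_finite_toFinset_sum _ hfB, ← Set.Finite.toFinset_prod, Finset.sum_mul_sum,
    Finset.sum_product]

theorem sigma2_prod_pow {ι : Type*} (s : Finset ι) (f : ι → (ZMod 2)[X]) (e : ι → ℕ)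
    (hirr : ∀ i ∈ s, Irreducible (f i)) (hmonic : ∀ i ∈ s, (f i).Monic) (hinj : Set.InjOn f s) :
    sigma2 (∏ i ∈ s, f i ^ e i) = ∏ i ∈ s, ∑ j ∈ Finset.range (e i + 1), f i ^ j := by
  classical
  induction s using Finset.induction_on with
  | empty => simp [sigma2_one]
  | insert i s hi ih =>
    simp only [Finset.mem_insert, forall_eq_or_imp, Finset.coe_insert, Set.injOn_insert hi]
      at hirr hmonic hinj
    have hne : ∀ j ∈ s, f j ^ e j ≠ 0 := fun j hj => pow_ne_zero _ (hirr.2 j hj).ne_zero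
    have hcop : IsCoprime (f i ^ e i) (∏ j ∈ s, f j ^ e j) :=
      IsCoprime.prod_right fun j hj =>
        (isCoprime_of_irreducible_of_monic_of_ne hirr.1 (hirr.2 j hj) hmonic.1 (hmonic.2 j hj)
          fun h => hinj.2 ⟨j, hj, h.symm⟩).pow
    rw [Finset.prod_insert hi, Finset.prod_insert hi,
      sigma2_mul (pow_ne_zero _ hirr.1.ne_zero) (Finset.prod_ne_zero_iff.mpr hne) hcop,
      sigma2_pow hirr.1 hmonic.1, ih hirr.2 hmonic.2 hinj.1]

theorem irreducible_X4_X3_X2_X_1 : Irreducible (X ^ 4 + X ^ 3 + X ^ 2 + X + 1 : (ZMod 2)[X]) := by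
  have : Fact (Nat.Prime 5) := ⟨by norm_num⟩
  have h := ZMod.irreducible_of_dvd_cyclotomic_of_natDegree (p := 2) (n := 5)
    (P := cyclotomic 5 (ZMod 2)) (hp := ⟨Nat.prime_two⟩) (by norm_num) dvd_rfl ?_
  · rw [cyclotomic_prime] at h
    simpa [Finset.sum_range_succ, add_assoc, add_comm, add_left_comm] using h
  · rw [natDegree_cyclotomic, Nat.totient_prime this.out]
    exact (orderOf_eq_prime_pow (p := 2) (n := 1) (by decide) (by decide)).symm

theorem irreducible_X4_X3_1 : Irreducible (X ^ 4 + X ^ 3 + 1 : (ZMod 2)[X]) := by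
  have h : taylor 1 (X ^ 4 + X ^ 3 + X ^ 2 + X + 1 : (ZMod 2)[X]) = X ^ 4 + X ^ 3 + 1 := by
    simp only [taylor_apply, add_comp, X_pow_comp, X_comp, one_comp, map_one]
    ring_nf
    reduce_mod_char
  rw [← h, ← coe_taylorEquiv]
  exact (MulEquiv.irreducible_iff (taylorEquiv (1 : ZMod 2))).mpr irreducible_X4_X3_X2_X_1

theorem sigma2_T5_eq_prod_sum :
    sigma2 ((X : (ZMod 2)[X]) ^ 4 * (X + 1) ^ 4
        * (X ^ 4 + X ^ 3 + X ^ 2 + X + 1) * (X ^ 4 + X ^ 3 + 1)) =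
      (∑ j ∈ Finset.range 5, X ^ j) * (∑ j ∈ Finset.range 5, (X + 1) ^ j)
        * (∑ j ∈ Finset.range 2, (X ^ 4 + X ^ 3 + X ^ 2 + X + 1) ^ j)
        * ∑ j ∈ Finset.range 2, (X ^ 4 + X ^ 3 + 1) ^ j := by
  set f : Fin 4 → (ZMod 2)[X] := ![X, X + 1, X ^ 4 + X ^ 3 + X ^ 2 + X + 1, X ^ 4 + X ^ 3 + 1]
  have hirr : ∀ i ∈ Finset.univ, Irreducible (f i) := by
    intro i _
    fin_cases i <;> simp only [f, Fin.reduceFinMk, Matrix.cons_val]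
    · exact irreducible_X
    · simpa using irreducible_of_degree_eq_one (degree_X_add_C (1 : ZMod 2))
    · exact irreducible_X4_X3_X2_X_1
    · exact irreducible_X4_X3_1
  have hmonic : ∀ i ∈ Finset.univ, (f i).Monic := by
    intro i _
    fin_cases i <;> simp only [f, Fin.reduceFinMk, Matrix.cons_val] <;> monicity!
  have hinj : Function.Injective f := by
    let coeffs (p : (ZMod 2)[X]) : ZMod 2 × ZMod 2 × ZMod 2 := (p.coeff 0, p.coeff 1, p.coeff 4)
    refine Function.Injective.of_comp (f := coeffs) ?_
    have : coeffs ∘ f = ![(0, 1, 0), (1, 1, 0), (1, 1, 1), (1, 0, 1)] := by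
      ext i : 1
      fin_cases i <;> simp [coeffs, f, coeff_X, coeff_one, coeff_X_pow]
    rw [this]
    decide
  simpa only [f, Fin.prod_univ_four, Matrix.cons_val, Nat.reduceAdd, pow_one] using
    sigma2_prod_pow Finset.univ f ![4, 4, 1, 1] hirr hmonic hinj.injOn

theorem T5_perfect :
    sigma2 ((X : (ZMod 2)[X]) ^ 4 * (X + 1) ^ 4
        * (X ^ 4 + X ^ 3 + X ^ 2 + X + 1) * (X ^ 4 + X ^ 3 + 1))
      = X ^ 4 * (X + 1) ^ 4 * (X ^ 4 + X ^ 3 + X ^ 2 + X + 1) * (X ^ 4 + X ^ 3 + 1) := by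
  have hσX : ∑ j ∈ Finset.range 5, (X : (ZMod 2)[X]) ^ j = X ^ 4 + X ^ 3 + X ^ 2 + X + 1 := by
    simp only [Finset.sum_range_succ, Finset.sum_range_zero]; ring
  have hσX1 : ∑ j ∈ Finset.range 5, (X + 1 : (ZMod 2)[X]) ^ j = X ^ 4 + X ^ 3 + 1 := by
    simp only [Finset.sum_range_succ, Finset.sum_range_zero]; ring_nf; reduce_mod_char
  have hσP : ∑ j ∈ Finset.range 2, (X ^ 4 + X ^ 3 + X ^ 2 + X + 1 : (ZMod 2)[X]) ^ j =
      X * (X + 1) ^ 3 := by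
    simp only [Finset.sum_range_succ, Finset.sum_range_zero]; ring_nf; reduce_mod_char
  have hσQ : ∑ j ∈ Finset.range 2, (X ^ 4 + X ^ 3 + 1 : (ZMod 2)[X]) ^ j = X ^ 3 * (X + 1) := by
    simp only [Finset.sum_range_succ, Finset.sum_range_zero]; ring_nf; reduce_mod_char
  rw [sigma2_T5_eq_prod_sum, hσX, hσX1, hσP, hσQ]
  ring
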